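/- arXiv:2605.05602 — 3 statements merged into one kernel-verified Lean document; each statement's English description precedes it below -/
import Mathlib

section
/- Let A, A' ∈ R^d and B, B' ∈ R be such that B > 0, ‖A‖/B ≤ 1, ‖2A' - A‖ ≤ δ, |2B' - B| ≤ δ, and δ ≤ B/2. Then ‖A'/B' - A/B‖ ≤ 4δ/B. -/
/-- Error propagation for the attention quotient under halving. -/
theorem attention_quotient_error
    (d : ℕ) (A A' : EuclideanSpace ℝ (Fin d)) (B B' δ : ℝ)
    (hB : 0 < B) (hA : ‖A‖ / B ≤ 1)
    (hδA : ‖(2 : ℝ) • A' - A‖ ≤ δ) (hδB : |2 * B' - B| ≤ δ) (hδ : δ ≤ B / 2) :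
    ‖B'⁻¹ • A' - B⁻¹ • A‖ ≤ 4 * δ / B := by
  set e := 2 * B' - B with he
  have hδ0 : 0 ≤ δ := le_trans (norm_nonneg _) hδA
  have hbe : B / 2 ≤ B + e := by
    have := neg_abs_le (2 * B' - B); linarith
  have hbe0 : 0 < B + e := by linarith
  have hB'0 : B' ≠ 0 := by
    have : B' = (B + e) / 2 := by rw [he]; ring
    rw [this]; positivity
  have hB0 : (B : ℝ) ≠ 0 := ne_of_gt hB
  have hAB : ‖A‖ ≤ B := by
    rw [div_le_one hB] at hA; exact hA
  have key : B'⁻¹ • A' - B⁻¹ • A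
      = (B * (B + e))⁻¹ • (B • ((2 : ℝ) • A' - A) - e • A) := by
    match_scalars <;> field_simp <;> ring
  rw [key]
  have h1 : ‖B • ((2 : ℝ) • A' - A) - e • A‖ ≤ 2 * B * δ := by
    calc ‖B • ((2 : ℝ) • A' - A) - e • A‖
        ≤ ‖B • ((2 : ℝ) • A' - A)‖ + ‖e • A‖ := norm_sub_le _ _
      _ = |B| * ‖(2 : ℝ) • A' - A‖ + |e| * ‖A‖ := by rw [norm_smul, norm_smul]; rfl
      _ ≤ B * δ + δ * B := by
          rw [abs_of_pos hB]
          gcongr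
      _ = 2 * B * δ := by ring
  rw [norm_smul]
  have h2 : |(B * (B + e))⁻¹| = (B * (B + e))⁻¹ := by
    rw [abs_of_pos]; positivity
  rw [Real.norm_eq_abs, h2]
  have h3 : (B * (B + e))⁻¹ ≤ (B * (B / 2))⁻¹ := by
    apply inv_anti₀
    · positivity
    · nlinarith
  calc (B * (B + e))⁻¹ * ‖B • ((2 : ℝ) • A' - A) - e • A‖
      ≤ (B * (B / 2))⁻¹ * (2 * B * δ) := by
        apply mul_le_mul h3 h1 (norm_nonneg _) (by positivity)
    _ = 4 * δ / B := by field_simp; ring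
end

section
/- For any real ρ ≥ 1, the series ∑_{m=0}^∞ √(m+2)·(log(m+2))^{3/2}·ρ^m/m! converges and is at most C·e^{ρ}·√ρ·(log(ρ+2))^{3/2} for some absolute constant C. -/
open Real Nat

/-! The weight `w t = √t (log t)^{3/2}` is increasing, and for `a ≥ e` it satisfies
`w (c a) ≤ c² w a` when `c ≥ 1`, because `log (c a) ≤ c log a`. Hence
`w (m + 2) ≤ (1 + ((m + 2) / (ρ + 2))²) w (ρ + 2)`, which reduces the series to the first
two Poisson moments: `∑ (m + 2)² ρ^m / m! = (ρ + 1)(ρ + 4) e^ρ`, by writing `(m + 2)²` in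
falling factorials and using `∑ m^{(k)} ρ^m / m! = ρ^k e^ρ`. -/

noncomputable def polylogWeight (t : ℝ) : ℝ := √t * log t ^ (3 / 2 : ℝ)

lemma polylogWeight_nonneg {t : ℝ} (ht : 1 ≤ t) : 0 ≤ polylogWeight t :=
  mul_nonneg (sqrt_nonneg t) (rpow_nonneg (log_nonneg ht) _)

lemma monotoneOn_polylogWeight : MonotoneOn polylogWeight (Set.Ici 1) := by
  intro s hs t ht hst
  have hs0 : 0 < s := lt_of_lt_of_le one_pos hs
  exact mul_le_mul (sqrt_le_sqrt hst)
    (rpow_le_rpow (log_nonneg hs) (log_le_log hs0 hst) (by norm_num))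
    (rpow_nonneg (log_nonneg hs) _) (sqrt_nonneg t)

lemma log_mul_le_mul_log {a c : ℝ} (ha : exp 1 ≤ a) (hc : 1 ≤ c) :
    log (c * a) ≤ c * log a := by
  have ha0 : 0 < a := (exp_pos 1).trans_le ha
  have hla : 1 ≤ log a := by rwa [le_log_iff_exp_le ha0]
  rw [log_mul (by positivity) ha0.ne']
  nlinarith [log_le_sub_one_of_pos (show 0 < c by linarith)]

lemma polylogWeight_mul_le {a c : ℝ} (ha : exp 1 ≤ a) (hc : 1 ≤ c) :
    polylogWeight (c * a) ≤ c ^ 2 * polylogWeight a := by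
  have ha1 : 1 ≤ a := (one_le_exp zero_le_one).trans ha
  have hc0 : 0 ≤ c := by linarith
  have hpow : √c * c ^ (3 / 2 : ℝ) = c ^ 2 := by
    rw [sqrt_eq_rpow, ← rpow_add' hc0 (by norm_num)]
    norm_num
  calc polylogWeight (c * a) = √c * √a * log (c * a) ^ (3 / 2 : ℝ) := by
        rw [polylogWeight, sqrt_mul hc0]
    _ ≤ √c * √a * (c * log a) ^ (3 / 2 : ℝ) := by
        have hlog : 0 ≤ log (c * a) := log_nonneg (one_le_mul_of_one_le_of_one_le hc ha1)
        gcongr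
        exact log_mul_le_mul_log ha hc
    _ = c ^ 2 * polylogWeight a := by
        rw [mul_rpow hc0 (log_nonneg ha1), polylogWeight, ← hpow]
        ring

lemma polylogWeight_le {a t : ℝ} (ha : exp 1 ≤ a) (ht : 1 ≤ t) :
    polylogWeight t ≤ (1 + (t / a) ^ 2) * polylogWeight a := by
  have ha1 : 1 ≤ a := (one_le_exp zero_le_one).trans ha
  have hw : 0 ≤ polylogWeight a := polylogWeight_nonneg ha1
  rcases le_total t a with hta | hat
  · calc polylogWeight t ≤ polylogWeight a := monotoneOn_polylogWeight ht ha1 hta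
      _ ≤ (1 + (t / a) ^ 2) * polylogWeight a := by nlinarith [sq_nonneg (t / a)]
  · have hc : 1 ≤ t / a := (one_le_div (by linarith)).2 hat
    calc polylogWeight t = polylogWeight (t / a * a) := by rw [div_mul_cancel₀ t (by positivity)]
      _ ≤ (t / a) ^ 2 * polylogWeight a := polylogWeight_mul_le ha hc
      _ ≤ (1 + (t / a) ^ 2) * polylogWeight a := by nlinarith

lemma polylogWeight_add_two_le {ρ : ℝ} (hρ : 2 / 3 ≤ ρ) :
    polylogWeight (ρ + 2) ≤ 2 * √ρ * log (ρ + 2) ^ (3 / 2 : ℝ) := by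
  have hsqrt : √(ρ + 2) ≤ 2 * √ρ := by
    rw [sqrt_le_iff, mul_pow, sq_sqrt (by linarith)]
    constructor <;> [positivity; linarith]
  exact mul_le_mul_of_nonneg_right hsqrt (rpow_nonneg (log_nonneg (by linarith)) _)

lemma hasSum_pow_div_factorial_exp (x : ℝ) : HasSum (fun m : ℕ => x ^ m / m !) (exp x) :=
  exp_eq_exp_ℝ ▸ NormedSpace.expSeries_div_hasSum_exp x

lemma hasSum_descFactorial_mul_pow_div_factorial (k : ℕ) (x : ℝ) :
    HasSum (fun m : ℕ => (m.descFactorial k : ℝ) * x ^ m / m !) (x ^ k * exp x) := by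
  have hvanish : ∑ m ∈ Finset.range k, (m.descFactorial k : ℝ) * x ^ m / m ! = 0 :=
    Finset.sum_eq_zero fun m hm => by
      rw [Nat.descFactorial_eq_zero_iff_lt.2 (Finset.mem_range.1 hm)]; simp
  have hshift : ∀ m : ℕ,
      ((m + k).descFactorial k : ℝ) * x ^ (m + k) / (m + k)! = x ^ k * (x ^ m / m !) := by
    intro m
    rw [← Nat.factorial_mul_descFactorial (Nat.le_add_left k m), Nat.add_sub_cancel]
    push_cast
    field_simp
    ring
  refine (hasSum_nat_add_iff' k).1 ?_
  rw [hvanish, sub_zero]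
  simpa only [hshift] using (hasSum_pow_div_factorial_exp x).mul_left (x ^ k)

lemma hasSum_add_two_sq_mul_pow_div_factorial (x : ℝ) :
    HasSum (fun m : ℕ => ((m : ℝ) + 2) ^ 2 * x ^ m / m !) ((x + 1) * (x + 4) * exp x) := by
  convert ((hasSum_descFactorial_mul_pow_div_factorial 2 x).add
    ((hasSum_descFactorial_mul_pow_div_factorial 1 x).mul_left 5)).add
    ((hasSum_descFactorial_mul_pow_div_factorial 0 x).mul_left 4) using 1
  · ext m
    rw [Nat.cast_descFactorial_two]
    simp only [Nat.descFactorial_one, Nat.descFactorial_zero]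
    push_cast
    ring
  · ring

lemma hasSum_one_add_sq_mul_pow_div_factorial (a x : ℝ) :
    HasSum (fun m : ℕ => (1 + (((m : ℝ) + 2) / a) ^ 2) * (x ^ m / m !))
      ((1 + (x + 1) * (x + 4) / a ^ 2) * exp x) := by
  have hterm (m : ℕ) : (1 + (((m : ℝ) + 2) / a) ^ 2) * (x ^ m / m !) =
      x ^ m / m ! + (a ^ 2)⁻¹ * (((m : ℝ) + 2) ^ 2 * x ^ m / m !) := by
    rw [div_pow]; ring
  rw [funext hterm, show (1 + (x + 1) * (x + 4) / a ^ 2) * exp x =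
    exp x + (a ^ 2)⁻¹ * ((x + 1) * (x + 4) * exp x) by ring]
  exact (hasSum_pow_div_factorial_exp x).add
    ((hasSum_add_two_sq_mul_pow_div_factorial x).mul_left _)

/-- The polylog-weighted exponential series converges and is bounded by
C·e^ρ·√ρ·(log(ρ+2))^{3/2}. -/
theorem weighted_exp_series_bound :
    ∃ C : ℝ, 0 < C ∧ ∀ ρ : ℝ, 1 ≤ ρ →
      Summable (fun m : ℕ =>
        Real.sqrt ((m : ℝ) + 2) * (Real.log ((m : ℝ) + 2)) ^ ((3 : ℝ) / 2) * ρ ^ m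
          / (Nat.factorial m)) ∧
      (∑' m : ℕ,
        Real.sqrt ((m : ℝ) + 2) * (Real.log ((m : ℝ) + 2)) ^ ((3 : ℝ) / 2) * ρ ^ m
          / (Nat.factorial m))
        ≤ C * Real.exp ρ * Real.sqrt ρ * (Real.log (ρ + 2)) ^ ((3 : ℝ) / 2) := by
  refine ⟨6, by norm_num, fun ρ hρ => ?_⟩
  have ha : exp 1 ≤ ρ + 2 := exp_one_lt_d9.le.trans (by linarith)
  have hm (m : ℕ) : (1 : ℝ) ≤ m + 2 := by linarith [(m.cast_nonneg : (0 : ℝ) ≤ m)]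
  have hdom (m : ℕ) : √((m : ℝ) + 2) * log ((m : ℝ) + 2) ^ ((3 : ℝ) / 2) * ρ ^ m / m ! ≤
      polylogWeight (ρ + 2) * ((1 + (((m : ℝ) + 2) / (ρ + 2)) ^ 2) * (ρ ^ m / m !)) := by
    calc √((m : ℝ) + 2) * log ((m : ℝ) + 2) ^ ((3 : ℝ) / 2) * ρ ^ m / m !
        = polylogWeight (m + 2) * (ρ ^ m / m !) := by rw [polylogWeight, mul_div_assoc]
      _ ≤ (1 + (((m : ℝ) + 2) / (ρ + 2)) ^ 2) * polylogWeight (ρ + 2) * (ρ ^ m / m !) := by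
        gcongr
        exact polylogWeight_le ha (hm m)
      _ = _ := by ring
  have hmajorant := (hasSum_one_add_sq_mul_pow_div_factorial (ρ + 2) ρ).mul_left
    (polylogWeight (ρ + 2))
  have hsummable := hmajorant.summable.of_nonneg_of_le (fun m => div_nonneg
    (mul_nonneg (polylogWeight_nonneg (hm m)) (by positivity)) (by positivity)) hdom
  refine ⟨hsummable, (hasSum_le hdom hsummable.hasSum hmajorant).trans ?_⟩
  have hratio : (ρ + 1) * (ρ + 4) / (ρ + 2) ^ 2 ≤ 2 := by
    rw [div_le_iff₀ (by positivity)]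
    nlinarith
  calc polylogWeight (ρ + 2) * ((1 + (ρ + 1) * (ρ + 4) / (ρ + 2) ^ 2) * exp ρ)
      ≤ 2 * √ρ * log (ρ + 2) ^ ((3 : ℝ) / 2) * (3 * exp ρ) := by
        have hW := polylogWeight_add_two_le (ρ := ρ) (by linarith)
        refine mul_le_mul hW ?_ (by positivity) ((polylogWeight_nonneg (by linarith)).trans hW)
        gcongr
        linarith
    _ = 6 * exp ρ * √ρ * log (ρ + 2) ^ ((3 : ℝ) / 2) := by ring
end

section
/- Suppose for each j ∈ {1,...,s} we have vectors x₁^j,...,xₙ^j in a finite-dimensional inner product space V_j with ‖xᵢ^j‖ ≤ 1, and convex bodies K^j ⊆ V_j each of Gaussian measure at least 1 - δ_j, with ∑ⱼ δ_j < 1/2. If Banaszczyk's vector balancing theorem holds (for any vectors of norm ≤ 1 and any symmetric convex body of Gaussian measure ≥ 1/2 there exist signs placing the signed sum in 5 times the body), then there exist signs σ₁,...,σₙ ∈ {-1,1} such that simultaneously for all j, ∑ᵢ σᵢ xᵢ^j ∈ 5√s · K^j. -/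
open MeasureTheory ProbabilityTheory Pointwise

/-- The standard Gaussian measure on `EuclideanSpace ℝ (Fin D)`. -/
noncomputable def stdGaussian (D : ℕ) : Measure (EuclideanSpace ℝ (Fin D)) :=
  (Measure.pi fun _ : Fin D => gaussianReal 0 1).map (EuclideanSpace.equiv (Fin D) ℝ).symm

/-!
Concatenate the `s` sequences into vectors of `ℝ^(D₁ + ⋯ + Dₛ)` and rescale them by `1/√s`, so
that they have norm at most `1`. The body `L = K¹ × ⋯ × Kˢ`, the intersection of the preimages of
the `Kʲ` under the block projections, is convex and symmetric. Each block projection pushes the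
standard Gaussian forward to the standard Gaussian, so the union bound gives
`γ(L) ≥ 1 - ∑ δⱼ > 1/2`. Banaszczyk's theorem balances the rescaled vectors in `5 L`; projecting
onto block `j` and undoing the rescaling puts the `j`-th signed sum in `5√s Kʲ`.
-/

theorem MeasureTheory.Measure.AbsolutelyContinuous.pi_fin {n : ℕ} {α : Fin n → Type*}
    [∀ i, MeasurableSpace (α i)] {μ ν : ∀ i, Measure (α i)} [∀ i, SigmaFinite (μ i)]
    [∀ i, SigmaFinite (ν i)] (h : ∀ i, μ i ≪ ν i) : Measure.pi μ ≪ Measure.pi ν := by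
  induction n with
  | zero => rw [Measure.pi_of_empty, Measure.pi_of_empty]
  | succ m ih =>
    let e := MeasurableEquiv.piFinSuccAbove α 0
    rw [← ((measurePreserving_piFinSuccAbove μ 0).symm e).map_eq,
      ← ((measurePreserving_piFinSuccAbove ν 0).symm e).map_eq]
    exact ((h 0).prod (ih fun i => h _)).map e.symm.measurable

theorem MeasureTheory.measurePreserving_piCurry {ι : Type*} [Fintype ι] {κ : ι → Type*}
    [∀ i, Fintype (κ i)] {X : (i : ι) → κ i → Type*} [∀ i j, MeasurableSpace (X i j)]
    (μ : (i : ι) → (j : κ i) → Measure (X i j)) [∀ i j, IsProbabilityMeasure (μ i j)] :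
    MeasurePreserving (MeasurableEquiv.piCurry X) (Measure.pi fun p => μ p.1 p.2)
      (Measure.pi fun i => Measure.pi (μ i)) where
  measurable := (MeasurableEquiv.piCurry X).measurable
  map_eq := by
    simpa only [Measure.infinitePi_eq_pi] using Measure.infinitePi_map_piCurry μ

lemma MeasureTheory.ofReal_one_sub_sum_le_measure_iInter {Ω ι : Type*} [MeasurableSpace Ω]
    [Fintype ι] {μ : Measure Ω} [IsProbabilityMeasure μ] {A : ι → Set Ω}
    (hA : ∀ i, NullMeasurableSet (A i) μ) {δ : ι → ℝ}
    (h : ∀ i, ENNReal.ofReal (1 - δ i) ≤ μ (A i)) :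
    ENNReal.ofReal (1 - ∑ i, δ i) ≤ μ (⋂ i, A i) := by
  have hcompl : ∀ i, μ.real (A i)ᶜ ≤ δ i := fun i => by
    have := (ENNReal.ofReal_le_iff_le_toReal (measure_ne_top μ _)).1 (h i)
    rw [probReal_compl_eq_one_sub₀ (hA i)]
    linarith [show μ.real (A i) = (μ (A i)).toReal from rfl]
  have hunion : μ.real (⋂ i, A i)ᶜ ≤ ∑ i, δ i := by
    rw [Set.compl_iInter]
    exact (measureReal_iUnion_fintype_le _).trans (Finset.sum_le_sum fun i _ => hcompl i)
  rw [probReal_compl_eq_one_sub₀ (.iInter hA)] at hunion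
  rw [ENNReal.ofReal_le_iff_le_toReal (measure_ne_top μ _)]
  change _ ≤ μ.real _
  linarith

lemma measurePreserving_toLp_stdGaussian (D : ℕ) :
    MeasurePreserving (MeasurableEquiv.toLp 2 (Fin D → ℝ))
      (Measure.pi fun _ => gaussianReal 0 1) (stdGaussian D) :=
  (MeasurableEquiv.toLp 2 (Fin D → ℝ)).measurable.measurePreserving _

instance (D : ℕ) : IsProbabilityMeasure (stdGaussian D) :=
  Measure.isProbabilityMeasure_map (MeasurableEquiv.toLp 2 (Fin D → ℝ)).measurable.aemeasurable

lemma stdGaussian_absolutelyContinuous (D : ℕ) : stdGaussian D ≪ volume := by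
  rw [← (measurePreserving_toLp_stdGaussian D).map_eq,
    ← (EuclideanSpace.volume_preserving_symm_measurableEquiv_toLp (Fin D)).symm.map_eq, volume_pi]
  exact (Measure.AbsolutelyContinuous.pi_fin fun _ =>
    gaussianReal_absolutelyContinuous 0 one_ne_zero).map (MeasurableEquiv.toLp 2 _).measurable

lemma Convex.nullMeasurableSet_stdGaussian {D : ℕ} {K : Set (EuclideanSpace ℝ (Fin D))}
    (hK : Convex ℝ K) : NullMeasurableSet K (stdGaussian D) :=
  (hK.nullMeasurableSet (μ := volume)).mono_ac (stdGaussian_absolutelyContinuous D)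

section Blocks

variable {s : ℕ} {D : Fin s → ℕ}

def blockProj (j : Fin s) :
    EuclideanSpace ℝ (Fin (∑ j, D j)) →ₗ[ℝ] EuclideanSpace ℝ (Fin (D j)) where
  toFun y := WithLp.toLp 2 fun k => y (finSigmaFinEquiv ⟨j, k⟩)
  map_add' _ _ := rfl
  map_smul' _ _ := rfl

def blockConcat (x : ∀ j, EuclideanSpace ℝ (Fin (D j))) : EuclideanSpace ℝ (Fin (∑ j, D j)) :=
  WithLp.toLp 2 fun m => x (finSigmaFinEquiv.symm m).1 (finSigmaFinEquiv.symm m).2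

@[simp]
lemma blockProj_blockConcat (x : ∀ j, EuclideanSpace ℝ (Fin (D j))) (j : Fin s) :
    blockProj j (blockConcat x) = x j := by
  ext k
  change x (finSigmaFinEquiv.symm (finSigmaFinEquiv ⟨j, k⟩)).1 _ = x j k
  rw [Equiv.symm_apply_apply]

lemma norm_blockConcat_sq (x : ∀ j, EuclideanSpace ℝ (Fin (D j))) :
    ‖blockConcat x‖ ^ 2 = ∑ j, ‖x j‖ ^ 2 := by
  simp only [EuclideanSpace.norm_sq_eq, blockConcat]
  rw [finSigmaFinEquiv.symm.sum_comp fun p => ‖x p.1 p.2‖ ^ 2, ← Finset.univ_sigma_univ,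
    Finset.sum_sigma]

lemma measurePreserving_blockProj (j : Fin s) :
    MeasurePreserving (blockProj j) (stdGaussian (∑ j, D j)) (stdGaussian (D j)) := by
  have hreindex := (measurePreserving_piCongrLeft (fun _ => gaussianReal 0 1)
    (finSigmaFinEquiv (n := D))).symm
  have hcurry := measurePreserving_piCurry fun (j : Fin s) (_ : Fin (D j)) => gaussianReal 0 1
  have heval := measurePreserving_eval
    (fun j : Fin s => Measure.pi fun _ : Fin (D j) => gaussianReal 0 1) j
  exact (measurePreserving_toLp_stdGaussian _).comp
    (heval.comp (hcurry.comp (hreindex.comp (measurePreserving_toLp_stdGaussian _).symm)))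

lemma ofReal_one_sub_sum_le_stdGaussian_iInter_preimage_blockProj
    {K : ∀ j, Set (EuclideanSpace ℝ (Fin (D j)))}
    (hK : ∀ j, NullMeasurableSet (K j) (stdGaussian (D j))) {δ : Fin s → ℝ}
    (h : ∀ j, ENNReal.ofReal (1 - δ j) ≤ stdGaussian (D j) (K j)) :
    ENNReal.ofReal (1 - ∑ j, δ j) ≤ stdGaussian (∑ j, D j) (⋂ j, blockProj j ⁻¹' K j) :=
  ofReal_one_sub_sum_le_measure_iInter
    (fun j => (hK j).preimage (measurePreserving_blockProj j).quasiMeasurePreserving)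
    fun j => (measurePreserving_blockProj j).measure_preimage (hK j) ▸ h j

lemma norm_blockConcat_le_sqrt {x : ∀ j, EuclideanSpace ℝ (Fin (D j))} (hx : ∀ j, ‖x j‖ ≤ 1) :
    ‖blockConcat x‖ ≤ √s := by
  rw [← Real.sqrt_sq (norm_nonneg _), norm_blockConcat_sq]
  refine Real.sqrt_le_sqrt ?_
  calc ∑ j, ‖x j‖ ^ 2 ≤ ∑ _j : Fin s, (1 : ℝ) :=
        Finset.sum_le_sum fun j _ => pow_le_one₀ (norm_nonneg _) (hx j)
    _ = s := by simp

end Blocks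

theorem simultaneous_balancing_general
    (banaszczyk : ∀ (D n : ℕ) (x : Fin n → EuclideanSpace ℝ (Fin D))
      (K : Set (EuclideanSpace ℝ (Fin D))),
      (∀ i, ‖x i‖ ≤ 1) → Convex ℝ K → (∀ y ∈ K, -y ∈ K) →
      (1 / 2 : ENNReal) ≤ stdGaussian D K →
      ∃ σ : Fin n → ℝ, (∀ i, σ i = 1 ∨ σ i = -1) ∧
        (∑ i, σ i • x i) ∈ (5 : ℝ) • K)
    (s n : ℕ) (D : Fin s → ℕ)
    (x : ∀ j, Fin n → EuclideanSpace ℝ (Fin (D j)))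
    (hx : ∀ j i, ‖x j i‖ ≤ 1)
    (K : ∀ j, Set (EuclideanSpace ℝ (Fin (D j))))
    (hKconv : ∀ j, Convex ℝ (K j)) (hKsymm : ∀ j, ∀ y ∈ K j, -y ∈ K j)
    (δ : Fin s → ℝ)
    (hKmeas : ∀ j, ENNReal.ofReal (1 - δ j) ≤ stdGaussian (D j) (K j))
    (hδ : ∑ j, δ j < 1 / 2) :
    ∃ σ : Fin n → ℝ, (∀ i, σ i = 1 ∨ σ i = -1) ∧
      ∀ j, (∑ i, σ i • x j i) ∈ (5 * Real.sqrt s) • K j := by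
  let y : Fin n → EuclideanSpace ℝ (Fin (∑ j, D j)) := fun i => (√s)⁻¹ • blockConcat (x · i)
  let L := ⋂ j, blockProj j ⁻¹' K j
  have hy : ∀ i, ‖y i‖ ≤ 1 := fun i => by
    rw [norm_smul, norm_inv, Real.norm_of_nonneg (Real.sqrt_nonneg _)]
    exact inv_mul_le_one_of_le₀ (norm_blockConcat_le_sqrt (hx · i)) (Real.sqrt_nonneg _)
  have hLconv : Convex ℝ L := convex_iInter fun j => (hKconv j).linear_preimage _
  have hLsymm : ∀ z ∈ L, -z ∈ L := fun z hz => Set.mem_iInter.2 fun j => by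
    simpa using hKsymm j _ (Set.mem_iInter.1 hz j)
  have hLmeas : (1 / 2 : ENNReal) ≤ stdGaussian (∑ j, D j) L := by
    refine le_trans ?_ (ofReal_one_sub_sum_le_stdGaussian_iInter_preimage_blockProj
      (fun j => (hKconv j).nullMeasurableSet_stdGaussian) hKmeas)
    calc (1 / 2 : ENNReal) = ENNReal.ofReal (1 / 2) := by
          rw [ENNReal.ofReal_div_of_pos two_pos]; simp
      _ ≤ _ := ENNReal.ofReal_le_ofReal (by linarith)
  obtain ⟨σ, hσ, z, hzL, hz⟩ := banaszczyk _ n y L hy hLconv hLsymm hLmeas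
  refine ⟨σ, hσ, fun j => ?_⟩
  have hproj : blockProj j (∑ i, σ i • y i) = (√s)⁻¹ • ∑ i, σ i • x j i := by
    simp [y, Finset.smul_sum, smul_comm (σ _)]
  have hK5 : (√s)⁻¹ • ∑ i, σ i • x j i ∈ (5 : ℝ) • K j := by
    rw [← hproj, ← hz, map_smul]
    exact Set.smul_mem_smul_set (Set.mem_iInter.1 hzL j)
  have hs : √(s : ℝ) ≠ 0 := Real.sqrt_ne_zero'.2 (Nat.cast_pos.2 j.pos)
  simpa [smul_inv_smul₀ hs, smul_smul, mul_comm] using Set.smul_mem_smul_set (a := √(s : ℝ)) hK5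

/-- Simultaneous balancing: assuming Banaszczyk's vector balancing theorem, s sequences
of unit-norm vectors can be balanced simultaneously with respect to s convex bodies of
Gaussian measure 1 - δ_j (with ∑ δ_j < 1/2), at the cost of a √s blow-up. -/
theorem simultaneous_balancing
    (banaszczyk : ∀ (D n : ℕ) (x : Fin n → EuclideanSpace ℝ (Fin D))
      (K : Set (EuclideanSpace ℝ (Fin D))),
      (∀ i, ‖x i‖ ≤ 1) → Convex ℝ K → (∀ y ∈ K, -y ∈ K) →
      (1 / 2 : ENNReal) ≤ stdGaussian D K →
      ∃ σ : Fin n → ℝ, (∀ i, σ i = 1 ∨ σ i = -1) ∧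
        (∑ i, σ i • x i) ∈ (5 : ℝ) • K)
    (s n : ℕ) (D : Fin s → ℕ)
    (x : ∀ j, Fin n → EuclideanSpace ℝ (Fin (D j)))
    (hx : ∀ j i, ‖x j i‖ ≤ 1)
    (K : ∀ j, Set (EuclideanSpace ℝ (Fin (D j))))
    (hKconv : ∀ j, Convex ℝ (K j)) (hKsymm : ∀ j, ∀ y ∈ K j, -y ∈ K j)
    (δ : Fin s → ℝ) (hδ0 : ∀ j, 0 ≤ δ j)
    (hKmeas : ∀ j, ENNReal.ofReal (1 - δ j) ≤ stdGaussian (D j) (K j))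
    (hδ : ∑ j, δ j < 1 / 2) :
    ∃ σ : Fin n → ℝ, (∀ i, σ i = 1 ∨ σ i = -1) ∧
      ∀ j, (∑ i, σ i • x j i) ∈ (5 * Real.sqrt s) • K j :=
  simultaneous_balancing_general banaszczyk s n D x hx K hKconv hKsymm δ hKmeas hδ
end
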